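/- arXiv:2504.09911 — 2 statements merged into one kernel-verified Lean document; each statement's English description precedes it below -/
import Mathlib

section
/- Let H(t,λ) = −(2/3)·t^{2/3}(1−t)^{1/3}(1−λt)^{−5/3} and F(t,λ) = t^{−1/3}(1−t)^{−2/3}(1−λt)^{−2/3}, defined for 0 < t < 1 and 0 < λ < 1 using positive real powers. Then ∂H/∂t = λ(1−λ)·∂²F/∂λ² + (1 − (7/3)λ)·∂F/∂λ − (4/9)·F. -/
open Real

/-- The key differential identity behind the inhomogeneous Picard–Fuchs equation:
`∂H/∂t = λ(1−λ)·∂²F/∂λ² + (1 − (7/3)λ)·∂F/∂λ − (4/9)·F`. -/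
theorem picard_fuchs_potential_identity
    (H F : ℝ → ℝ → ℝ)
    (hH : ∀ t l, H t l = -(2/3) * t ^ ((2:ℝ)/3) * (1 - t) ^ ((1:ℝ)/3) * (1 - l * t) ^ (-(5:ℝ)/3))
    (hF : ∀ t l, F t l = t ^ (-(1:ℝ)/3) * (1 - t) ^ (-(2:ℝ)/3) * (1 - l * t) ^ (-(2:ℝ)/3)) :
    ∀ t l : ℝ, 0 < t → t < 1 → 0 < l → l < 1 →
      deriv (fun s => H s l) t =
        l * (1 - l) * deriv (fun m => deriv (fun m' => F t m') m) l
          + (1 - (7/3) * l) * deriv (fun m => F t m) l - (4/9) * F t l := by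
  intro t l ht0 ht1 hl0 hl1
  have hu : (0:ℝ) < 1 - t := by linarith
  have hv : (0:ℝ) < 1 - l * t := by nlinarith
  set C : ℝ := t ^ (-(1:ℝ)/3) * (1 - t) ^ (-(2:ℝ)/3) with hC
  -- first derivative of F in the second variable, at any point m with 1 - m*t > 0
  have key : ∀ m : ℝ, 0 < 1 - m * t →
      HasDerivAt (fun m' => F t m')
        (C * ((-t) * (-(2:ℝ)/3) * (1 - m * t) ^ (-(2:ℝ)/3 - 1))) m := by
    intro m hm
    have h1 : HasDerivAt (fun m' : ℝ => 1 - m' * t) (-t) m := by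
      simpa using ((hasDerivAt_id m).mul_const t).const_sub 1
    have h2 := (h1.rpow_const (p := -(2:ℝ)/3) (Or.inl hm.ne')).const_mul C
    simp only [hF, mul_assoc] at h2 ⊢
    convert h2 using 2
    · rfl
    · rfl
    · rw [hC]; ring
  have hderivF : ∀ m : ℝ, 0 < 1 - m * t →
      deriv (fun m' => F t m') m = C * ((-t) * (-(2:ℝ)/3) * (1 - m * t) ^ (-(2:ℝ)/3 - 1)) :=
    fun m hm => (key m hm).deriv
  -- second derivative of F in the second variable at l
  have hopen : {m : ℝ | 0 < 1 - m * t} ∈ nhds l := by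
    have : IsOpen {m : ℝ | 0 < 1 - m * t} :=
      isOpen_lt continuous_const (by continuity)
    exact this.mem_nhds hv
  have heq : (fun m => deriv (fun m' => F t m') m) =ᶠ[nhds l]
      (fun m => C * ((-t) * (-(2:ℝ)/3) * (1 - m * t) ^ (-(2:ℝ)/3 - 1))) :=
    Filter.eventually_of_mem hopen (fun m hm => hderivF m hm)
  have h2nd : HasDerivAt (fun m => C * ((-t) * (-(2:ℝ)/3) * (1 - m * t) ^ (-(2:ℝ)/3 - 1)))
      (C * ((-t) * (-(2:ℝ)/3)) * ((-t) * (-(2:ℝ)/3 - 1) * (1 - l * t) ^ (-(2:ℝ)/3 - 1 - 1))) l := by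
    have h1 : HasDerivAt (fun m : ℝ => 1 - m * t) (-t) l := by
      simpa using ((hasDerivAt_id l).mul_const t).const_sub 1
    have := (h1.rpow_const (p := -(2:ℝ)/3 - 1) (Or.inl hv.ne')).const_mul
      (C * ((-t) * (-(2:ℝ)/3)))
    convert this using 2
    · rfl
    · rfl
    · ring
  have hd2 : deriv (fun m => deriv (fun m' => F t m') m) l =
      C * ((-t) * (-(2:ℝ)/3)) * ((-t) * (-(2:ℝ)/3 - 1) * (1 - l * t) ^ (-(2:ℝ)/3 - 1 - 1)) := by
    rw [heq.deriv_eq]; exact h2nd.deriv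
  -- derivative of H in the first variable at t
  have hA : HasDerivAt (fun s : ℝ => -(2/3) * s ^ ((2:ℝ)/3))
      (-(2/3) * ((2:ℝ)/3 * t ^ ((2:ℝ)/3 - 1))) t :=
    (Real.hasDerivAt_rpow_const (Or.inl ht0.ne')).const_mul (-(2/3))
  have hB : HasDerivAt (fun s : ℝ => (1 - s) ^ ((1:ℝ)/3))
      ((-1) * ((1:ℝ)/3) * (1 - t) ^ ((1:ℝ)/3 - 1)) t := by
    have h1 : HasDerivAt (fun s : ℝ => 1 - s) (-1) t := by
      simpa using (hasDerivAt_id t).const_sub 1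
    exact h1.rpow_const (Or.inl hu.ne')
  have hCd : HasDerivAt (fun s : ℝ => (1 - l * s) ^ (-(5:ℝ)/3))
      ((-l) * (-(5:ℝ)/3) * (1 - l * t) ^ (-(5:ℝ)/3 - 1)) t := by
    have h1 : HasDerivAt (fun s : ℝ => 1 - l * s) (-l) t := by
      simpa using ((hasDerivAt_id t).const_mul l).const_sub 1
    exact h1.rpow_const (Or.inl hv.ne')
  have hHd : HasDerivAt (fun s => H s l)
      ((-(2/3) * ((2:ℝ)/3 * t ^ ((2:ℝ)/3 - 1)) * (1 - t) ^ ((1:ℝ)/3)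
          + -(2/3) * t ^ ((2:ℝ)/3) * ((-1) * ((1:ℝ)/3) * (1 - t) ^ ((1:ℝ)/3 - 1)))
        * (1 - l * t) ^ (-(5:ℝ)/3)
        + -(2/3) * t ^ ((2:ℝ)/3) * (1 - t) ^ ((1:ℝ)/3)
          * ((-l) * (-(5:ℝ)/3) * (1 - l * t) ^ (-(5:ℝ)/3 - 1))) t := by
    have := (hA.mul hB).mul hCd
    simp only [hH]
    convert this using 1
    all_goals rfl
  rw [hHd.deriv, hd2, hderivF l hv, hF, hC]
  -- express all powers in a common basis
  have e1 : t ^ ((2:ℝ)/3) = t * t ^ (-(1:ℝ)/3) := by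
    rw [show (2:ℝ)/3 = 1 + (-(1:ℝ)/3) by norm_num, rpow_add ht0, rpow_one]
  have e2 : t ^ ((2:ℝ)/3 - 1) = t ^ (-(1:ℝ)/3) := by norm_num
  have e3 : (1 - t) ^ ((1:ℝ)/3) = (1 - t) * (1 - t) ^ (-(2:ℝ)/3) := by
    rw [show (1:ℝ)/3 = 1 + (-(2:ℝ)/3) by norm_num, rpow_add hu, rpow_one]
  have e4 : (1 - t) ^ ((1:ℝ)/3 - 1) = (1 - t) ^ (-(2:ℝ)/3) := by norm_num
  have e5 : (1 - l * t) ^ (-(5:ℝ)/3) = (1 - l * t) ^ (-(2:ℝ)/3) / (1 - l * t) := by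
    rw [show -(5:ℝ)/3 = -(2:ℝ)/3 + (-1) by norm_num, rpow_add hv, rpow_neg_one]
    ring
  have e6 : (1 - l * t) ^ (-(5:ℝ)/3 - 1) = (1 - l * t) ^ (-(2:ℝ)/3) / (1 - l * t) ^ 2 := by
    rw [show -(5:ℝ)/3 - 1 = -(2:ℝ)/3 + (-2) by norm_num, rpow_add hv,
      show (-2:ℝ) = ((-2:ℤ):ℝ) by norm_num, rpow_intCast, zpow_neg]
    field_simp
  have e7 : (1 - l * t) ^ (-(2:ℝ)/3 - 1) = (1 - l * t) ^ (-(2:ℝ)/3) / (1 - l * t) := by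
    rw [show -(2:ℝ)/3 - 1 = -(2:ℝ)/3 + (-1) by norm_num, rpow_add hv, rpow_neg_one]
    ring
  have e8 : (1 - l * t) ^ (-(2:ℝ)/3 - 1 - 1) = (1 - l * t) ^ (-(2:ℝ)/3) / (1 - l * t) ^ 2 := by
    rw [show -(2:ℝ)/3 - 1 - 1 = -(2:ℝ)/3 + (-2) by norm_num, rpow_add hv,
      show (-2:ℝ) = ((-2:ℤ):ℝ) by norm_num, rpow_intCast, zpow_neg]
    field_simp
  rw [e1, e2, e3, e4, e5, e6, e7, e8]
  have hw : (1 - t * l) ≠ 0 := by nlinarith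
  field_simp
  ring
end

section
/- For real λ with 0 < λ < 1, the double improper integral ∫∫_{Γ°} dx dy / (y(y−x)(1−x)(1−λx))^{2/3} over the open triangle Γ° = {(x,y) : 0 < x < y < 1} converges (is finite). -/
open Real MeasureTheory Set

/-- `x ^ (-2/3)` is integrable on `(0,1)`. -/
lemma aux_int_rpow : IntegrableOn (fun x : ℝ => x ^ (-(2:ℝ)/3)) (Ioo 0 1) volume := by
  have h : IntervalIntegrable (fun x : ℝ => x ^ (-(2:ℝ)/3)) volume 0 1 :=
    intervalIntegral.intervalIntegrable_rpow' (by norm_num)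
  rw [intervalIntegrable_iff_integrableOn_Ioc_of_le (by norm_num : (0:ℝ) ≤ 1)] at h
  exact h.mono_set Ioo_subset_Ioc_self

/-- `(1-x) ^ (-2/3)` is integrable on `(0,1)`. -/
lemma aux_int_rpow' : IntegrableOn (fun x : ℝ => (1 - x) ^ (-(2:ℝ)/3)) (Ioo 0 1) volume := by
  have h : IntervalIntegrable (fun x : ℝ => (1 - x) ^ (-(2:ℝ)/3)) volume (1 - 1) (1 - 0) :=
    (intervalIntegral.intervalIntegrable_rpow' (r := -(2:ℝ)/3) (by norm_num) (a := 1) (b := 0)).comp_sub_left 1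
  simp only [sub_self, sub_zero] at h
  rw [intervalIntegrable_iff_integrableOn_Ioc_of_le (by norm_num : (0:ℝ) ≤ 1)] at h
  exact h.mono_set Ioo_subset_Ioc_self

/-- `x ^ (-2/3) * (1-x) ^ (-2/3)` is integrable on `(0,1)`. -/
lemma aux_int_beta :
    IntegrableOn (fun x : ℝ => x ^ (-(2:ℝ)/3) * (1 - x) ^ (-(2:ℝ)/3)) (Ioo 0 1) volume := by
  have hsplit : Ioo (0:ℝ) 1 ⊆ Ioo 0 (1/2) ∪ Ico (1/2) 1 := by
    intro x hx
    rcases lt_or_ge x (1/2) with h | h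
    · exact Or.inl ⟨hx.1, h⟩
    · exact Or.inr ⟨h, hx.2⟩
  have hmeas : ∀ s : Set ℝ, MeasurableSet s → s ⊆ Ioo 0 1 →
      AEStronglyMeasurable (fun x : ℝ => x ^ (-(2:ℝ)/3) * (1 - x) ^ (-(2:ℝ)/3))
        (volume.restrict s) := by
    intro s hs hsub
    refine ContinuousOn.aestronglyMeasurable ?_ hs
    refine ContinuousOn.mul ?_ ?_
    · exact continuousOn_id.rpow_const fun x hx => Or.inl (hsub hx).1.ne'
    · exact (continuousOn_const.sub continuousOn_id).rpow_const
        fun x hx => Or.inl (by have := (hsub hx).2; intro h; simp at h; linarith)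
  have h1 : IntegrableOn (fun x : ℝ => x ^ (-(2:ℝ)/3) * (1 - x) ^ (-(2:ℝ)/3))
      (Ioo 0 (1/2)) volume := by
    refine Integrable.mono
      ((aux_int_rpow.mono_set (Ioo_subset_Ioo le_rfl (by norm_num))).mul_const
        (((1:ℝ)/2) ^ (-(2:ℝ)/3)))
      (hmeas _ measurableSet_Ioo (Ioo_subset_Ioo le_rfl (by norm_num))) ?_
    rw [ae_restrict_iff' measurableSet_Ioo]
    refine ae_of_all _ fun x hx => ?_
    have hx0 : 0 < x := hx.1
    have hx2 : (1/2 : ℝ) ≤ 1 - x := by have := hx.2; linarith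
    have hb1 : (0:ℝ) ≤ x ^ (-(2:ℝ)/3) := rpow_nonneg hx0.le _
    have hb2 : (0:ℝ) ≤ (1 - x) ^ (-(2:ℝ)/3) := rpow_nonneg (by linarith) _
    rw [Real.norm_eq_abs, Real.norm_eq_abs, abs_of_nonneg (mul_nonneg hb1 hb2),
      abs_of_nonneg (mul_nonneg hb1 (rpow_nonneg (by norm_num) _))]
    exact mul_le_mul_of_nonneg_left
      (rpow_le_rpow_of_nonpos (by norm_num) hx2 (by norm_num)) hb1
  have h2 : IntegrableOn (fun x : ℝ => x ^ (-(2:ℝ)/3) * (1 - x) ^ (-(2:ℝ)/3))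
      (Ico (1/2) 1) volume := by
    have hsub : Ico ((1:ℝ)/2) 1 ⊆ Ioo 0 1 := fun x hx => ⟨by have := hx.1; linarith, hx.2⟩
    refine Integrable.mono
      (((aux_int_rpow'.mono_set hsub)).const_mul (((1:ℝ)/2) ^ (-(2:ℝ)/3)))
      (hmeas _ measurableSet_Ico hsub) ?_
    rw [ae_restrict_iff' measurableSet_Ico]
    refine ae_of_all _ fun x hx => ?_
    have hx0 : (1/2 : ℝ) ≤ x := hx.1
    have hb1 : (0:ℝ) ≤ x ^ (-(2:ℝ)/3) := rpow_nonneg (by linarith) _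
    have hb2 : (0:ℝ) ≤ (1 - x) ^ (-(2:ℝ)/3) := rpow_nonneg (by have := hx.2; linarith) _
    rw [Real.norm_eq_abs, Real.norm_eq_abs, abs_of_nonneg (mul_nonneg hb1 hb2),
      abs_of_nonneg (mul_nonneg (rpow_nonneg (by norm_num) _) hb2)]
    exact mul_le_mul_of_nonneg_right
      (rpow_le_rpow_of_nonpos (by norm_num) hx0 (by norm_num)) hb2
  exact (h1.union h2).mono_set hsplit

/-- The shear `(x, y) ↦ (x, y - x)` as a measurable equivalence. -/
def shearEquiv : (ℝ × ℝ) ≃ᵐ (ℝ × ℝ) where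
  toFun p := (p.1, p.2 - p.1)
  invFun p := (p.1, p.2 + p.1)
  left_inv p := by simp
  right_inv p := by simp
  measurable_toFun := measurable_fst.prodMk (measurable_snd.sub measurable_fst)
  measurable_invFun := measurable_fst.prodMk (measurable_snd.add measurable_fst)

lemma shearEquiv_measurePreserving :
    MeasurePreserving (⇑shearEquiv) (volume : Measure (ℝ × ℝ)) volume := by
  have : MeasurePreserving (fun p : ℝ × ℝ => (p.1, p.2 - p.1))
      ((volume : Measure ℝ).prod volume) ((volume : Measure ℝ).prod volume) := by
    refine MeasurePreserving.skew_product (g := fun x y => y - x)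
      (MeasurePreserving.id (volume : Measure ℝ))
      (measurable_snd.sub measurable_fst) (ae_of_all _ fun x => ?_)
    have := (measurePreserving_add_right (volume : Measure ℝ) (-x)).map_eq
    simpa [sub_eq_add_neg] using this
  rw [Measure.volume_eq_prod]
  exact this

/-- For `0 < λ < 1`, the integrand of the normal function is Lebesgue integrable
over the open triangle `{(x,y) : 0 < x < y < 1}`. -/
theorem double_integral_converges (l : ℝ) (hl0 : 0 < l) (hl1 : l < 1) :
    IntegrableOn
      (fun p : ℝ × ℝ => (p.2 * (p.2 - p.1) * (1 - p.1) * (1 - l * p.1)) ^ (-(2:ℝ)/3))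
      {p : ℝ × ℝ | 0 < p.1 ∧ p.1 < p.2 ∧ p.2 < 1} volume := by
  set e : ℝ := -(2:ℝ)/3 with he
  set S : Set (ℝ × ℝ) := {p : ℝ × ℝ | 0 < p.1 ∧ p.1 < p.2 ∧ p.2 < 1} with hS
  -- the dominating function K on the rectangle
  set K : ℝ × ℝ → ℝ := fun q => ((1 - l) ^ e * (q.1 ^ e * (1 - q.1) ^ e)) * q.2 ^ e with hK
  have hl' : (0:ℝ) < 1 - l := by linarith
  -- K is integrable on the unit square
  have hKsq : IntegrableOn K (Ioo (0:ℝ) 1 ×ˢ Ioo (0:ℝ) 1) volume := by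
    have hf : Integrable (fun x : ℝ => (1 - l) ^ e * (x ^ e * (1 - x) ^ e))
        (volume.restrict (Ioo 0 1)) := aux_int_beta.const_mul _
    have hg : Integrable (fun y : ℝ => y ^ e) (volume.restrict (Ioo 0 1)) := aux_int_rpow
    have := hf.mul_prod hg
    rwa [Measure.prod_restrict, ← Measure.volume_eq_prod] at this
  -- transfer through the shear
  have hKT : IntegrableOn (K ∘ ⇑shearEquiv)
      (⇑shearEquiv ⁻¹' (Ioo (0:ℝ) 1 ×ˢ Ioo (0:ℝ) 1)) volume :=
    (shearEquiv_measurePreserving.integrableOn_comp_preimage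
      shearEquiv.measurableEmbedding).mpr hKsq
  -- the triangle is contained in the preimage of the square
  have hsub : S ⊆ ⇑shearEquiv ⁻¹' (Ioo (0:ℝ) 1 ×ˢ Ioo (0:ℝ) 1) := by
    rintro ⟨x, y⟩ ⟨hx, hxy, hy⟩
    refine ⟨⟨hx, lt_trans hxy hy⟩, ?_, ?_⟩ <;> simp only [shearEquiv] <;> dsimp <;> linarith
  have hG : IntegrableOn (K ∘ ⇑shearEquiv) S volume := hKT.mono_set hsub
  -- measurability of the original function on S
  have hSmeas : MeasurableSet S := by
    have : IsOpen S := by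
      refine (isOpen_lt continuous_const continuous_fst).inter
        ((isOpen_lt continuous_fst continuous_snd).inter
          (isOpen_lt continuous_snd continuous_const))
    exact this.measurableSet
  have hfm : AEStronglyMeasurable
      (fun p : ℝ × ℝ => (p.2 * (p.2 - p.1) * (1 - p.1) * (1 - l * p.1)) ^ e)
      (volume.restrict S) := by
    refine ContinuousOn.aestronglyMeasurable ?_ hSmeas
    refine ContinuousOn.rpow_const ?_ ?_
    · fun_prop
    · rintro ⟨x, y⟩ ⟨hx, hxy, hy⟩
      left
      have h1 : 0 < y := lt_trans hx hxy
      have h2 : 0 < y - x := by linarith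
      have h3 : 0 < 1 - x := by linarith
      have h4 : 0 < 1 - l * x := by nlinarith
      positivity
  -- domination
  refine Integrable.mono hG hfm ?_
  rw [ae_restrict_iff' hSmeas]
  refine ae_of_all _ ?_
  rintro ⟨x, y⟩ ⟨hx, hxy, hy⟩
  have h1 : 0 < y := lt_trans hx hxy
  have h2 : 0 < y - x := by linarith
  have h3 : 0 < 1 - x := by linarith
  have h4 : 0 < 1 - l * x := by nlinarith
  have hbase : 0 < y * (y - x) * (1 - x) * (1 - l * x) := by positivity
  have hGval : (K ∘ ⇑shearEquiv) (x, y)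
      = ((1 - l) ^ e * (x ^ e * (1 - x) ^ e)) * (y - x) ^ e := rfl
  have key : (y * (y - x) * (1 - x) * (1 - l * x)) ^ e
      ≤ ((1 - l) ^ e * (x ^ e * (1 - x) ^ e)) * (y - x) ^ e := by
    have hexp : e ≤ 0 := by rw [he]; norm_num
    have expand : (y * (y - x) * (1 - x) * (1 - l * x)) ^ e
        = y ^ e * (y - x) ^ e * (1 - x) ^ e * (1 - l * x) ^ e := by
      rw [Real.mul_rpow (by positivity) h4.le, Real.mul_rpow (by positivity) h3.le,
        Real.mul_rpow h1.le h2.le]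
    rw [expand]
    have hy_le : y ^ e ≤ x ^ e := rpow_le_rpow_of_nonpos hx hxy.le hexp
    have hd_le : (1 - l * x) ^ e ≤ (1 - l) ^ e := by
      refine rpow_le_rpow_of_nonpos hl' ?_ hexp
      nlinarith
    calc y ^ e * (y - x) ^ e * (1 - x) ^ e * (1 - l * x) ^ e
        ≤ x ^ e * (y - x) ^ e * (1 - x) ^ e * (1 - l) ^ e := by
          refine mul_le_mul ?_ hd_le (rpow_nonneg h4.le _) ?_
          · refine mul_le_mul_of_nonneg_right ?_ (rpow_nonneg h3.le _)
            exact mul_le_mul_of_nonneg_right hy_le (rpow_nonneg h2.le _)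
          · exact mul_nonneg (mul_nonneg (rpow_nonneg hx.le _) (rpow_nonneg h2.le _))
              (rpow_nonneg h3.le _)
      _ = ((1 - l) ^ e * (x ^ e * (1 - x) ^ e)) * (y - x) ^ e := by ring
  rw [Real.norm_eq_abs, Real.norm_eq_abs, abs_of_nonneg (rpow_nonneg hbase.le _),
    hGval, abs_of_nonneg (by positivity)]
  exact key
end
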